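/- arXiv:1302.4359 — 5 statements merged into one kernel-verified Lean document; each statement's English description precedes it below -/
import Mathlib

section
/- If an infinite binary word w has bounded width (i.e., there exist rationals a, b₁, b₂ such that the graphic g_w of w satisfies a·x + b₁ ≤ g_w(x) ≤ a·x + b₂ for all x, where g_w(n) = |pref_n(w)|₁ − |pref_n(w)|₀), then w is weakly abelian periodic: w can be factorized as w = v₀v₁v₂… with all vᵢ (i ≥ 1) nonempty finite words having the same frequency of each letter. -/
open Filter Topology

/-- Number of 1's (`true`) in the length-`n` prefix of the infinite binary word `w`. -/
def ones (w : ℕ → Bool) (n : ℕ) : ℕ :=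
  ((Finset.range n).filter (fun i => w i = true)).card

/-- Number of 0's (`false`) in the length-`n` prefix of `w`. -/
def zeros (w : ℕ → Bool) (n : ℕ) : ℕ := n - ones w n

/-- The graphic of `w`: `g_w(n) = |pref_n(w)|₁ - |pref_n(w)|₀`. -/
def graphic (w : ℕ → Bool) (n : ℕ) : ℤ := (ones w n : ℤ) - (zeros w n : ℤ)

/-- `w` is weakly abelian periodic with frequency `ρ` of the letter 1 in the blocks:
there is a factorization `w = v₀v₁v₂⋯` (cut points `k 0 < k 1 < ⋯`, with `v₀` the
prefix of length `k 0`) such that each block `vᵢ = w[k i, k (i+1))`, `i ≥ 1`,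
has frequency `ρ` of the letter 1. -/
def WAPwith (w : ℕ → Bool) (ρ : ℚ) : Prop :=
  ∃ k : ℕ → ℕ, StrictMono k ∧
    ∀ i : ℕ, ((ones w (k (i+1)) : ℚ) - (ones w (k i) : ℚ))
      = ρ * ((k (i+1) : ℚ) - (k i : ℚ))

/-- `w` is weakly abelian periodic. -/
def WAP (w : ℕ → Bool) : Prop := ∃ ρ : ℚ, WAPwith w ρ

/-- `w` is bounded weakly abelian periodic: WAP with blocks of uniformly bounded length. -/
def BoundedWAP (w : ℕ → Bool) : Prop :=
  ∃ (ρ : ℚ) (k : ℕ → ℕ) (C : ℕ), StrictMono k ∧ (∀ i, k (i+1) - k i ≤ C) ∧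
    ∀ i : ℕ, ((ones w (k (i+1)) : ℚ) - (ones w (k i) : ℚ))
      = ρ * ((k (i+1) : ℚ) - (k i : ℚ))

/-- `w` has bounded width: its graphic lies between two parallel lines with
rational coefficients. -/
def BoundedWidth (w : ℕ → Bool) : Prop :=
  ∃ a b₁ b₂ : ℚ, ∀ n : ℕ,
    a * n + b₁ ≤ (graphic w n : ℚ) ∧ (graphic w n : ℚ) ≤ a * n + b₂

/-! The normalized graphic `g_w(n) - a n` stays in `[b₁, b₂]` and lies in `(1 / den a) ℤ`, so
it takes only finitely many values, hence some value `c` infinitely often. Cutting `w` at the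
successive positions where `g_w(n) - a n = c` gives blocks on which the graphic has slope
exactly `a`, i.e. in which the letter `1` has frequency `(a + 1) / 2`. -/

open Set

lemma graphic_eq_two_mul_ones_sub (w : ℕ → Bool) (n : ℕ) :
    (graphic w n : ℚ) = 2 * ones w n - n := by
  have hle : ones w n ≤ n := by
    simpa [ones] using Finset.card_filter_le (Finset.range n) (fun i => w i = true)
  simp only [graphic, zeros]
  push_cast [Nat.cast_sub hle]
  ring

lemma wapWith_of_infinite_setOf_ones_sub_eq {w : ℕ → Bool} {ρ c : ℚ}
    (h : {n : ℕ | (ones w n : ℚ) - ρ * n = c}.Infinite) : WAPwith w ρ := by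
  refine ⟨Nat.nth _, Nat.nth_strictMono h, fun i => ?_⟩
  have h₁ := Nat.nth_mem_of_infinite h (i + 1)
  have h₀ := Nat.nth_mem_of_infinite h i
  linear_combination h₁ - h₀

lemma wapWith_of_infinite_setOf_graphic_sub_eq {w : ℕ → Bool} {a c : ℚ}
    (h : {n : ℕ | (graphic w n : ℚ) - a * n = c}.Infinite) : WAPwith w ((a + 1) / 2) := by
  refine wapWith_of_infinite_setOf_ones_sub_eq (c := c / 2) (h.mono fun n hn => ?_)
  have hn : (graphic w n : ℚ) - a * n = c := hn
  rw [graphic_eq_two_mul_ones_sub] at hn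
  show (ones w n : ℚ) - (a + 1) / 2 * n = c / 2
  linear_combination hn / 2

lemma Set.Finite.exists_infinite_setOf_eq {α β : Type*} [Infinite α] {s : Set β} (hs : s.Finite)
    {f : α → β} (hf : ∀ x, f x ∈ s) : ∃ c, {x | f x = c}.Infinite := by
  have : Finite s := hs.to_subtype
  obtain ⟨c, hc⟩ := Finite.exists_infinite_fiber (codRestrict f s hf)
  refine ⟨c, (infinite_coe_iff.mp hc).mono fun x hx => ?_⟩
  simpa [Subtype.ext_iff] using hx

lemma finite_setOf_mem_Icc_mul_eq_intCast (d : ℕ) (hd : 0 < d) (b₁ b₂ : ℚ) :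
    {q : ℚ | q ∈ Icc b₁ b₂ ∧ ∃ z : ℤ, d * q = z}.Finite := by
  refine ((finite_Icc ⌈d * b₁⌉ ⌊d * b₂⌋).image fun z : ℤ => (z : ℚ) / d).subset ?_
  rintro q ⟨⟨hq₁, hq₂⟩, z, hz⟩
  have hd' : (0 : ℚ) < d := by exact_mod_cast hd
  refine ⟨z, ⟨?_, ?_⟩, by simp only [← hz]; field_simp⟩
  · rw [Int.ceil_le, ← hz]; gcongr
  · rw [Int.le_floor, ← hz]; gcongr

/-- If an infinite binary word has bounded width, then it is weakly abelian periodic. -/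
theorem boundedWidth_imp_WAP (w : ℕ → Bool) (h : BoundedWidth w) : WAP w := by
  obtain ⟨a, b₁, b₂, hb⟩ := h
  have hmem : ∀ n : ℕ, (graphic w n : ℚ) - a * n ∈
      {q : ℚ | q ∈ Icc b₁ b₂ ∧ ∃ z : ℤ, a.den * q = z} := fun n =>
    ⟨⟨by linarith [(hb n).1], by linarith [(hb n).2]⟩, a.den * graphic w n - a.num * n, by
      push_cast; rw [← Rat.mul_den_eq_num]; ring⟩
  obtain ⟨c, hc⟩ :=
    (finite_setOf_mem_Icc_mul_eq_intCast a.den a.pos b₁ b₂).exists_infinite_setOf_eq hmem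
  exact ⟨_, wapWith_of_infinite_setOf_graphic_sub_eq hc⟩
end

section
/- If an infinite binary word w is bounded weakly abelian periodic (WAP with blocks of uniformly bounded length), then w has bounded width. -/
open Filter Topology

/-
Proof idea: if every block has letter-1 frequency `ρ`, the defect `d n = |pref_n w|₁ - ρ n` takes
the same value at every cut point, and it moves by at most `1 + |ρ|` per letter. Since the blocks
have bounded length, every position is within bounded distance of a cut point (or of the origin),
so `d` is bounded. As `g_w(n) = (2ρ - 1) n + 2 d n`, the graphic stays between two lines of slope
`2ρ - 1`.
-/

section BoundedIncrements

variable {α : Type*} [Ring α] [LinearOrder α] [IsStrictOrderedRing α]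

theorem abs_sub_le_mul_of_abs_succ_sub_le {f : ℕ → α} {L : α} (hf : ∀ n, |f (n + 1) - f n| ≤ L)
    (m j : ℕ) : |f (m + j) - f m| ≤ L * j := by
  induction j with
  | zero => simp
  | succ j ih =>
    calc |f (m + (j + 1)) - f m| ≤ |f (m + j + 1) - f (m + j)| + |f (m + j) - f m| :=
          abs_sub_le _ _ _
      _ ≤ L + L * j := add_le_add (hf _) ih
      _ = L * ↑(j + 1) := by rw [Nat.cast_succ, mul_add_one, add_comm]

theorem abs_sub_le_of_abs_succ_sub_le_of_eq_on_cuts {f : ℕ → α} {L c : α} {k : ℕ → ℕ} {C : ℕ}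
    (hf : ∀ n, |f (n + 1) - f n| ≤ L) (hk : StrictMono k) (hgap : ∀ i, k (i + 1) - k i ≤ C)
    (hcut : ∀ i, f (k i) = c) (n : ℕ) : |f n - c| ≤ L * (k 0 + C) := by
  have hL : 0 ≤ L := (abs_nonneg _).trans (hf 0)
  rcases lt_or_ge n (k 0) with hn | hn
  · have h := abs_sub_le_mul_of_abs_succ_sub_le hf n (k 0 - n)
    rw [Nat.add_sub_cancel' hn.le, hcut, abs_sub_comm] at h
    refine h.trans (mul_le_mul_of_nonneg_left ?_ hL)
    exact_mod_cast (Nat.sub_le _ _).trans (Nat.le_add_right _ _)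
  · obtain ⟨i, hlo, hhi⟩ :=
      hk.exists_between_of_tendsto_atTop hk.tendsto_atTop (Nat.lt_succ_of_le hn)
    have h := abs_sub_le_mul_of_abs_succ_sub_le hf (k i) (n - k i)
    rw [Nat.add_sub_cancel' (Nat.le_of_lt_succ hlo), hcut] at h
    refine h.trans (mul_le_mul_of_nonneg_left ?_ hL)
    have := hgap i
    exact_mod_cast (show n - k i ≤ k 0 + C by omega)

end BoundedIncrements

theorem ones_succ (w : ℕ → Bool) (n : ℕ) : ones w (n + 1) = ones w n + (w n).toNat := by
  cases h : w n <;> simp [ones, Finset.range_add_one, Finset.filter_insert, h]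

theorem ones_le (w : ℕ → Bool) (n : ℕ) : ones w n ≤ n :=
  (Finset.card_filter_le _ _).trans (Finset.card_range n).le

def defect (w : ℕ → Bool) (ρ : ℚ) (n : ℕ) : ℚ := ones w n - ρ * n

theorem abs_defect_succ_sub_le (w : ℕ → Bool) (ρ : ℚ) (n : ℕ) :
    |defect w ρ (n + 1) - defect w ρ n| ≤ 1 + |ρ| := by
  have hbit : |((w n).toNat : ℚ)| ≤ 1 := by cases w n <;> simp
  calc |defect w ρ (n + 1) - defect w ρ n| = |((w n).toNat : ℚ) - ρ| := by
        rw [defect, defect, ones_succ]; push_cast; congr 1; ring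
    _ ≤ |((w n).toNat : ℚ)| + |ρ| := abs_sub _ _
    _ ≤ 1 + |ρ| := by linarith

theorem defect_eq_of_WAP {w : ℕ → Bool} {ρ : ℚ} {k : ℕ → ℕ}
    (hfreq : ∀ i, (ones w (k (i + 1)) : ℚ) - ones w (k i) = ρ * ((k (i + 1) : ℚ) - k i))
    (i : ℕ) : defect w ρ (k i) = defect w ρ (k 0) := by
  induction i with
  | zero => rfl
  | succ i ih => rw [← ih, defect, defect]; linarith [hfreq i]

theorem graphic_eq_defect (w : ℕ → Bool) (ρ : ℚ) (n : ℕ) :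
    (graphic w n : ℚ) = (2 * ρ - 1) * n + 2 * defect w ρ n := by
  rw [graphic, zeros, defect]
  push_cast [ones_le w n]
  ring

/-- If an infinite binary word is bounded weakly abelian periodic, then it has
bounded width. -/
theorem boundedWAP_imp_boundedWidth (w : ℕ → Bool) (h : BoundedWAP w) :
    BoundedWidth w := by
  obtain ⟨ρ, k, C, hk, hgap, hfreq⟩ := h
  have hd := abs_sub_le_of_abs_succ_sub_le_of_eq_on_cuts (abs_defect_succ_sub_le w ρ) hk hgap
    (defect_eq_of_WAP hfreq)
  set d₀ := defect w ρ (k 0)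
  set B := (1 + |ρ|) * (k 0 + C)
  refine ⟨2 * ρ - 1, 2 * d₀ - 2 * B, 2 * d₀ + 2 * B, fun n => ?_⟩
  have := abs_le.mp (hd n)
  rw [graphic_eq_defect w ρ]
  constructor <;> linarith
end

section
/- The paperfolding word w (the Toeplitz word with pattern 0?1?) satisfies |pref_{4^k − 1}(w)|₀ = 4^k/2 and |pref_{4^k − 1}(w)|₁ = 4^k/2 − 1 for all k ≥ 1; consequently w is weakly abelian periodic along the line y = −1 (its graphic with v₀ = (1,−1), v₁ = (1,1) equals −1 at infinitely many points). -/
open Filter Topology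

/-- Number of 1's among the first `n` letters `w 1, …, w n` of the (1-indexed)
infinite binary word `w`. -/
def onesP (w : ℕ → Bool) (n : ℕ) : ℕ :=
  ((Finset.range n).filter (fun i => w (i + 1) = true)).card

/-- `w` (1-indexed) is the paperfolding word, i.e. the Toeplitz word with pattern `0?1?`:
positions `≡ 1 (mod 4)` carry `0`, positions `≡ 3 (mod 4)` carry `1`, and the
subsequence of remaining (even) positions is again the word itself. -/
def IsPaperfolding (w : ℕ → Bool) : Prop :=
  (∀ m : ℕ, w (4 * m + 1) = false) ∧ (∀ m : ℕ, w (4 * m + 3) = true) ∧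
    (∀ m : ℕ, 1 ≤ m → w (2 * m) = w m)

/-!
Splitting a prefix of length `2n` into its odd and even positions: the odd positions carry
the alternating word `0101…`, which contributes `⌊n/2⌋` ones, and the even positions carry
`pref_n(w)` again. Hence `|pref_{2n+1}(w)|₁ = |pref_n(w)|₁ + ⌈n/2⌉`, and iterating this
along `2^(m+1) - 1 = 2 (2^m - 1) + 1` gives `|pref_{2^(m+1)-1}(w)|₁ = 2^m - 1`.
-/

lemma onesP_succ (w : ℕ → Bool) (n : ℕ) :
    onesP w (n + 1) = onesP w n + if w (n + 1) then 1 else 0 := by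
  unfold onesP
  rw [Finset.range_add_one, Finset.filter_insert]
  split
  · rw [Finset.card_insert_of_notMem (by simp)]
  · simp

namespace IsPaperfolding

variable {w : ℕ → Bool}

lemma apply_two_mul_add_one (hw : IsPaperfolding w) (n : ℕ) :
    w (2 * n + 1) = decide (n % 2 = 1) := by
  obtain ⟨m, rfl | rfl⟩ := Nat.even_or_odd' n
  · rw [show 2 * (2 * m) + 1 = 4 * m + 1 by ring, hw.1 m]
    simp
  · rw [show 2 * (2 * m + 1) + 1 = 4 * m + 3 by ring, hw.2.1 m]
    simp [Nat.add_mod]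

lemma onesP_two_mul (hw : IsPaperfolding w) (n : ℕ) :
    onesP w (2 * n) = onesP w n + n / 2 := by
  induction n with
  | zero => simp [onesP]
  | succ n ih =>
    have h_even : w (2 * n + 1 + 1) = w (n + 1) := hw.2.2 (n + 1) (by omega)
    rw [show 2 * (n + 1) = 2 * n + 1 + 1 by ring, onesP_succ, onesP_succ, ih,
      hw.apply_two_mul_add_one, onesP_succ, h_even]
    split_ifs <;> simp_all <;> omega

lemma onesP_two_mul_add_one (hw : IsPaperfolding w) (n : ℕ) :
    onesP w (2 * n + 1) = onesP w n + (n + 1) / 2 := by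
  rw [onesP_succ, hw.onesP_two_mul, hw.apply_two_mul_add_one]
  split_ifs <;> simp_all <;> omega

lemma onesP_two_pow_sub_one (hw : IsPaperfolding w) (m : ℕ) :
    onesP w (2 ^ (m + 1) - 1) = 2 ^ m - 1 := by
  induction m with
  | zero => simpa [onesP] using hw.1 0
  | succ m ih =>
    have h_pos : 1 ≤ 2 ^ m := Nat.one_le_two_pow
    rw [show 2 ^ (m + 1 + 1) - 1 = 2 * (2 ^ (m + 1) - 1) + 1 by rw [pow_succ]; omega,
      hw.onesP_two_mul_add_one, ih, pow_succ]
    omega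

lemma onesP_four_pow_sub_one (hw : IsPaperfolding w) {k : ℕ} (hk : 1 ≤ k) :
    onesP w (4 ^ k - 1) = 4 ^ k / 2 - 1 := by
  obtain ⟨j, rfl⟩ := Nat.exists_eq_add_of_le' hk
  have h_four_pow : 4 ^ (j + 1) = 2 ^ (2 * j + 1 + 1) := by
    rw [show 2 * j + 1 + 1 = 2 * (j + 1) by ring, pow_mul]; norm_num
  rw [h_four_pow, hw.onesP_two_pow_sub_one, pow_succ 2 (2 * j + 1), Nat.mul_div_cancel _ two_pos]

end IsPaperfolding

/-- For the paperfolding word, `|pref_{4^k-1}(w)|₀ = 4^k/2` and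
`|pref_{4^k-1}(w)|₁ = 4^k/2 - 1` for all `k ≥ 1`; consequently its graphic
(with `v₀ = (1,-1)`, `v₁ = (1,1)`) equals `-1` at infinitely many points,
i.e. `w` is WAP along the line `y = -1`. -/
theorem paperfolding_prefix_counts (w : ℕ → Bool) (hw : IsPaperfolding w) :
    (∀ k : ℕ, 1 ≤ k →
      (4 ^ k - 1) - onesP w (4 ^ k - 1) = 4 ^ k / 2 ∧
      onesP w (4 ^ k - 1) = 4 ^ k / 2 - 1) ∧
    (∀ N : ℕ, ∃ n : ℕ, N ≤ n ∧
      (onesP w n : ℤ) - ((n - onesP w n : ℕ) : ℤ) = -1) := by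
  have h_even (k : ℕ) (hk : 1 ≤ k) : 2 ∣ 4 ^ k :=
    dvd_trans (by norm_num) (dvd_pow_self 4 (by omega))
  have h_pos (k : ℕ) : 1 ≤ 4 ^ k := Nat.one_le_pow _ _ (by norm_num)
  have h_counts (k : ℕ) (hk : 1 ≤ k) :
      (4 ^ k - 1) - onesP w (4 ^ k - 1) = 4 ^ k / 2 ∧ onesP w (4 ^ k - 1) = 4 ^ k / 2 - 1 := by
    have := h_even k hk
    have := h_pos k
    rw [hw.onesP_four_pow_sub_one hk]
    omega
  refine ⟨h_counts, fun N => ⟨4 ^ (N + 1) - 1, ?_, ?_⟩⟩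
  · have : N + 1 < 4 ^ (N + 1) := Nat.lt_pow_self (by norm_num)
    omega
  · obtain ⟨h_zeros, h_ones⟩ := h_counts (N + 1) (by omega)
    rw [h_zeros, h_ones]
    have := h_even (N + 1) (by omega)
    have := h_pos (N + 1)
    omega
end

section
/- If an infinite word w is weakly abelian periodic, then every letter occurring in the WAP factorization blocks has rational frequency within the blocks; consequently, if some letter a has an irrational frequency ρₐ(w) = lim_{n→∞}|pref_n(w)|ₐ/n, then w is not weakly abelian periodic. -/
open Filter Topology

/-- Number of occurrences of the letter `a` in the length-`n` prefix of the
infinite word `w` over the alphabet `A`. -/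
def cnt {A : Type*} [DecidableEq A] (w : ℕ → A) (a : A) (n : ℕ) : ℕ :=
  ((Finset.range n).filter (fun i => w i = a)).card

/-- `w` is weakly abelian periodic with block frequencies `f : A → ℝ`:
there are cut points `k 0 < k 1 < ⋯` such that in every block
`w[k i, k (i+1))`, `i ≥ 1`, each letter `a` has frequency `f a`. -/
def WAPgenWith {A : Type*} [DecidableEq A] (w : ℕ → A) (f : A → ℝ) : Prop :=
  ∃ k : ℕ → ℕ, StrictMono k ∧
    ∀ i : ℕ, ∀ a : A, ((cnt w a (k (i+1)) : ℝ) - (cnt w a (k i) : ℝ))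
      = f a * ((k (i+1) : ℝ) - (k i : ℝ))

/-- If an infinite word is WAP, then the block frequencies of all letters are
rational; consequently, if some letter has an irrational frequency
`ρ = lim |pref_n(w)|ₐ / n`, then `w` is not weakly abelian periodic. -/
theorem irrational_frequency_not_WAP {A : Type*} [Fintype A] [DecidableEq A]
    (w : ℕ → A) :
    (∀ f : A → ℝ, WAPgenWith w f → ∀ a : A, ∃ q : ℚ, f a = (q : ℝ)) ∧
    (∀ (a : A) (ρ : ℝ), Irrational ρ →
      Tendsto (fun n => (cnt w a n : ℝ) / n) atTop (𝓝 ρ) →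
      ¬ ∃ f : A → ℝ, WAPgenWith w f) := by
  have key : ∀ f : A → ℝ, WAPgenWith w f → ∀ a : A, ∃ q : ℚ, f a = (q : ℝ) := by
    intro f hf a
    obtain ⟨k, hk, h⟩ := hf
    have hlt : (k 1 : ℝ) < k 2 := by exact_mod_cast hk (by norm_num : (1:ℕ) < 2)
    have hne : (k 2 : ℝ) - k 1 ≠ 0 := by linarith
    refine ⟨((cnt w a (k 2) : ℚ) - cnt w a (k 1)) / ((k 2 : ℚ) - k 1), ?_⟩
    have hfa : f a = ((cnt w a (k 2) : ℝ) - cnt w a (k 1)) / ((k 2 : ℝ) - k 1) := by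
      rw [eq_div_iff hne]
      linarith [h 1 a]
    rw [hfa]
    push_cast
    ring
  refine ⟨key, ?_⟩
  rintro a ρ hirr htend ⟨f, hf⟩
  obtain ⟨k, hk, h⟩ := hf
  -- k n → ∞
  have hktop : Tendsto k atTop atTop := StrictMono.tendsto_atTop hk
  have hkR : Tendsto (fun n => (k n : ℝ)) atTop atTop :=
    tendsto_natCast_atTop_atTop.comp hktop
  have hsub : Tendsto (fun n => (cnt w a (k n) : ℝ) / (k n)) atTop (𝓝 ρ) :=
    htend.comp hktop
  -- telescoping formula
  have key2 : ∀ n, 1 ≤ n →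
      (cnt w a (k n) : ℝ) = cnt w a (k 1) + f a * ((k n : ℝ) - k 1) := by
    intro n hn
    induction n with
    | zero => omega
    | succ m ih =>
      rcases Nat.lt_or_ge m 1 with hm | hm
      · interval_cases m
        ring
      · have h1 := h m a
        have h2 := ih hm
        linarith
  -- limit of subsequence is f a
  have hlim : Tendsto (fun n => (cnt w a (k n) : ℝ) / (k n)) atTop (𝓝 (f a)) := by
    have h0 : Tendsto
        (fun n => ((cnt w a (k 1) : ℝ) - f a * k 1) / (k n) + f a) atTop
        (𝓝 (0 + f a)) :=
      (tendsto_const_nhds.div_atTop hkR).add tendsto_const_nhds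
    rw [zero_add] at h0
    refine h0.congr' ?_
    filter_upwards [eventually_ge_atTop 1] with n hn
    have hkn : (k n : ℝ) ≠ 0 := by
      have : (1:ℕ) ≤ k n := le_trans hn (hk.le_apply)
      positivity
    rw [key2 n hn]
    field_simp
    ring
  have hρ : ρ = f a := tendsto_nhds_unique hsub hlim
  obtain ⟨q, hq⟩ := key f ⟨k, hk, h⟩ a
  exact hirr ⟨q, by rw [hρ, hq]⟩
end

section
/- Let w be an infinite binary uniformly recurrent word with uniform rational letter frequencies (the minimal and maximal factor frequencies of each letter coincide and are rational). Then there exists a point u in the shift orbit closure of w which is weakly abelian periodic (with block frequencies equal to the frequencies of w). -/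
open Filter Topology

/-- Number of 1's in the factor `w[i, i+n)` of `w`. -/
def cntSeg (w : ℕ → Bool) (i n : ℕ) : ℕ :=
  ((Finset.range n).filter (fun l => w (i + l) = true)).card

/-- `w` is uniformly recurrent: each factor of `w` occurs in `w` with bounded gaps. -/
def UniformlyRecurrent (w : ℕ → Bool) : Prop :=
  ∀ i n : ℕ, ∃ C : ℕ, ∀ m : ℕ, ∃ j : ℕ, m ≤ j ∧ j ≤ m + C ∧ ∀ l < n, w (j + l) = w (i + l)

/-- `w` has uniform frequency `ρ` of the letter 1: the frequencies of 1 in all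
factors of length `n` converge to `ρ` uniformly as `n → ∞` (equivalently, the
minimal and maximal factor frequencies coincide and equal `ρ`). -/
def UniformFrequency (w : ℕ → Bool) (ρ : ℝ) : Prop :=
  ∀ ε : ℝ, 0 < ε → ∃ N : ℕ, ∀ n : ℕ, N ≤ n → ∀ i : ℕ,
    |(cntSeg w i n : ℝ) / n - ρ| < ε

lemma cntSeg_zero (w : ℕ → Bool) (i : ℕ) : cntSeg w i 0 = 0 := by simp [cntSeg]

lemma cntSeg_succ (w : ℕ → Bool) (i n : ℕ) :
    cntSeg w i (n+1) = cntSeg w i n + (if w (i+n) = true then 1 else 0) := by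
  unfold cntSeg
  rw [Finset.range_add_one, Finset.filter_insert]
  split
  · rw [Finset.card_insert_of_notMem (by simp)]
  · simp

lemma cntSeg_add (w : ℕ → Bool) (i m n : ℕ) :
    cntSeg w i (m + n) = cntSeg w i m + cntSeg w (i + m) n := by
  induction n with
  | zero => simp [cntSeg_zero]
  | succ n ih =>
      rw [← Nat.add_assoc, cntSeg_succ, ih, cntSeg_succ, Nat.add_assoc i m n]
      ring

lemma cntSeg_congr {w₁ w₂ : ℕ → Bool} {i₁ i₂ n : ℕ}
    (h : ∀ l < n, w₁ (i₁ + l) = w₂ (i₂ + l)) : cntSeg w₁ i₁ n = cntSeg w₂ i₂ n := by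
  unfold cntSeg
  congr 1
  apply Finset.filter_congr
  intro l hl
  simp [h l (Finset.mem_range.mp hl)]

lemma cntSeg_le (w : ℕ → Bool) (i n : ℕ) : cntSeg w i n ≤ n :=
  (Finset.card_filter_le _ _).trans (by simp)

lemma ones_eq_cntSeg (w : ℕ → Bool) (n : ℕ) : ones w n = cntSeg w 0 n := by
  simp [ones, cntSeg]

lemma rat_num_eq (ρ : ℚ) : (ρ.num : ℚ) = ρ * ρ.den := by
  have hden : (ρ.den : ℚ) ≠ 0 := by exact_mod_cast ρ.den_nz
  exact (div_eq_iff hden).mp (Rat.num_div_den ρ)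

lemma keyB (w : ℕ → Bool) (ρ : ℚ)
    (hur : UniformlyRecurrent w) (hfreq : UniformFrequency w (ρ : ℝ)) (a t : ℕ) :
    ∃ i m : ℕ, 0 < m ∧ (∀ l < t, w (i + l) = w (a + l)) ∧
      ((cntSeg w (i + t) m : ℚ) = ρ * m) := by
  by_contra hcon
  push_neg at hcon
  obtain ⟨C, hC⟩ := hur a t
  have occs : ∀ k : ℕ, ∃ j, k*(C+1) ≤ j ∧ j ≤ k*(C+1)+C ∧ ∀ l < t, w (j+l) = w (a+l) :=
    fun k => hC (k*(C+1))
  choose occ hocc1 hocc2 hocc3 using occs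
  have hlt : ∀ k k', k < k' → occ k < occ k' := by
    intro k k' h
    have h1 : occ k ≤ k*(C+1)+C := hocc2 k
    have h2 : (k+1)*(C+1) ≤ k'*(C+1) := Nat.mul_le_mul_right _ h
    have h3 : k*(C+1)+C < (k+1)*(C+1) := by ring_nf; omega
    have h4 := hocc1 k'
    omega
  set J : ℕ → ℤ := fun k =>
    (ρ.den : ℤ) * (cntSeg w 0 (occ k + t) : ℤ) - ρ.num * ((occ k + t : ℕ) : ℤ) with hJ
  have hden : (ρ.den : ℚ) ≠ 0 := by exact_mod_cast ρ.den_nz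
  have hJne : ∀ k k', k < k' → J k ≠ J k' := by
    intro k k' hkk' hEq
    have hm : occ k < occ k' := hlt _ _ hkk'
    set m := occ k' - occ k with hm'
    have hmpos : 0 < m := by omega
    have hsplit : occ k' + t = (occ k + t) + m := by omega
    have hcnt : cntSeg w 0 (occ k' + t)
        = cntSeg w 0 (occ k + t) + cntSeg w (occ k + t) m := by
      rw [hsplit]
      simpa using cntSeg_add w 0 (occ k + t) m
    apply hcon (occ k) m hmpos (hocc3 k)
    have hint : (ρ.den : ℤ) * (cntSeg w (occ k + t) m : ℤ) = ρ.num * (m : ℤ) := by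
      simp only [hJ] at hEq
      rw [hcnt, hsplit] at hEq
      push_cast at hEq
      ring_nf at hEq ⊢
      linarith
    have hq : ((ρ.den:ℚ)) * (cntSeg w (occ k + t) m : ℚ) = (ρ.num:ℚ) * m := by
      exact_mod_cast congrArg (fun x : ℤ => (x : ℚ)) hint
    apply mul_left_cancel₀ hden
    rw [hq, rat_num_eq ρ]
    ring
  -- frequency bound
  have hd1 : (1:ℝ) ≤ (ρ.den:ℝ) := by exact_mod_cast ρ.pos
  have hd0 : (0:ℝ) < (ρ.den:ℝ) := by linarith
  have hDr : (1:ℝ) ≤ (C:ℝ) + 1 := by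
    have : (0:ℝ) ≤ (C:ℝ) := Nat.cast_nonneg C
    linarith
  have hDr0 : (0:ℝ) < (C:ℝ) + 1 := by linarith
  set ε : ℝ := 1 / (4 * (ρ.den:ℝ) * ((C:ℝ)+1)) with hεdef
  have hε : 0 < ε := by positivity
  obtain ⟨N, hN⟩ := hfreq ε hε
  set c : ℝ := (N : ℝ) * (1 + |(ρ:ℝ)|) with hcdef
  have hc : 0 ≤ c := by positivity
  have hbound : ∀ n : ℕ, |(cntSeg w 0 n : ℝ) - ρ * n| ≤ ε * n + c := by
    intro n
    rcases Nat.eq_zero_or_pos n with h0 | h0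
    · subst h0
      simp [cntSeg_zero]
      positivity
    rcases le_or_gt N n with h | h
    · have hn : (0:ℝ) < n := by exact_mod_cast h0
      have hN' := hN n h 0
      have e : (cntSeg w 0 n : ℝ) - ρ*n = n * ((cntSeg w 0 n : ℝ)/n - ρ) := by
        field_simp
      rw [e, abs_mul, abs_of_pos hn]
      have h2 : (n:ℝ) * |(cntSeg w 0 n : ℝ)/n - (ρ:ℝ)| ≤ n * ε :=
        mul_le_mul_of_nonneg_left (le_of_lt hN') (le_of_lt hn)
      linarith
    · have h1 : (cntSeg w 0 n : ℝ) ≤ n := by exact_mod_cast cntSeg_le w 0 n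
      have h2 : (0:ℝ) ≤ (cntSeg w 0 n : ℝ) := Nat.cast_nonneg _
      have h3 : (n:ℝ) ≤ N := by exact_mod_cast le_of_lt h
      have h4 : |(cntSeg w 0 n : ℝ) - ρ * n| ≤ |(cntSeg w 0 n : ℝ)| + |(ρ:ℝ) * (n:ℝ)| :=
        abs_sub _ _
      have hn0 : (0:ℝ) ≤ (n:ℝ) := Nat.cast_nonneg _
      rw [abs_of_nonneg h2, abs_mul, abs_of_nonneg hn0] at h4
      have h6 : |(ρ:ℝ)| * n ≤ |(ρ:ℝ)| * N := mul_le_mul_of_nonneg_left h3 (abs_nonneg _)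
      have h8 : (0:ℝ) ≤ ε * n := by positivity
      have h9 : (N:ℝ) + |(ρ:ℝ)| * N = c := by rw [hcdef]; ring
      linarith
  have hnumR : ((ρ.num:ℝ)) = (ρ:ℝ) * (ρ.den:ℝ) := by exact_mod_cast rat_num_eq ρ
  have hJbound : ∀ k : ℕ, |(J k : ℝ)| ≤ (ρ.den:ℝ) * (ε * ((occ k + t : ℕ):ℝ) + c) := by
    intro k
    have hJcast : (J k : ℝ)
        = (ρ.den:ℝ) * ((cntSeg w 0 (occ k + t):ℝ) - (ρ:ℝ) * ((occ k + t : ℕ):ℝ)) := by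
      simp only [hJ]
      push_cast
      rw [hnumR]
      ring
    rw [hJcast, abs_mul, abs_of_pos hd0]
    exact mul_le_mul_of_nonneg_left (hbound (occ k + t)) (le_of_lt hd0)
  -- counting
  have main : ∀ K : ℕ, (K:ℝ) ≤ (K:ℝ)/2 + 2*((C:ℝ)+(t:ℝ)) + 2*(ρ.den:ℝ)*c + 2 := by
    intro K
    set B : ℝ := (ρ.den:ℝ) * (ε * ((K*(C+1)+C+t : ℕ):ℝ) + c) with hBdef
    set M : ℤ := ⌈B⌉ with hMdef
    have hBnonneg : 0 ≤ B := by positivity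
    have hM0 : (0:ℤ) ≤ M := Int.ceil_nonneg hBnonneg
    have hJB : ∀ k, k ≤ K → |(J k : ℝ)| ≤ B := by
      intro k hk
      refine (hJbound k).trans ?_
      rw [hBdef]
      have hnk : (occ k + t : ℕ) ≤ K*(C+1)+C+t := by
        have h1 := hocc2 k
        have h2 : k*(C+1) ≤ K*(C+1) := Nat.mul_le_mul_right _ hk
        omega
      have hnkR : ((occ k + t : ℕ):ℝ) ≤ ((K*(C+1)+C+t : ℕ):ℝ) := by exact_mod_cast hnk
      have h3 := mul_le_mul_of_nonneg_left hnkR (le_of_lt hε)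
      nlinarith
    have hmem : ∀ k ∈ Finset.range (K+1), J k ∈ Finset.Icc (-M) M := by
      intro k hk
      have hk' : k ≤ K := Nat.lt_succ_iff.mp (Finset.mem_range.mp hk)
      have hb := abs_le.mp (hJB k hk')
      have hBM : B ≤ (M:ℝ) := Int.le_ceil B
      rw [Finset.mem_Icc]
      constructor
      · have : -(M:ℝ) ≤ (J k : ℝ) := by linarith [hb.1]
        exact_mod_cast this
      · have : (J k : ℝ) ≤ (M:ℝ) := by linarith [hb.2]
        exact_mod_cast this
    have hinj : Set.InjOn J (Finset.range (K+1)) := by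
      intro k hk k' hk' hEq
      rcases lt_trichotomy k k' with h | h | h
      · exact absurd hEq (hJne _ _ h)
      · exact h
      · exact absurd hEq.symm (hJne _ _ h)
    have hcard := Finset.card_le_card_of_injOn J hmem hinj
    rw [Finset.card_range, Int.card_Icc] at hcard
    have h2 : (K:ℤ) ≤ 2*M := by omega
    have h3 : (K:ℝ) ≤ 2*(M:ℝ) := by exact_mod_cast h2
    have h4 : (M:ℝ) < B + 1 := Int.ceil_lt_add_one B
    have h5 : (ρ.den:ℝ) * ε = 1 / (4*((C:ℝ)+1)) := by
      rw [hεdef]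
      field_simp
    have hnbar : ((K*(C+1)+C+t : ℕ):ℝ) = (K:ℝ)*((C:ℝ)+1) + ((C:ℝ)+(t:ℝ)) := by
      push_cast
      ring
    have hBle : B ≤ (K:ℝ)/4 + ((C:ℝ)+(t:ℝ)) + (ρ.den:ℝ)*c := by
      have e1 : B = ((ρ.den:ℝ) * ε) * ((K*(C+1)+C+t : ℕ):ℝ) + (ρ.den:ℝ)*c := by
        rw [hBdef]; ring
      rw [e1, h5, hnbar]
      have e2 : 1 / (4*((C:ℝ)+1)) * ((K:ℝ)*((C:ℝ)+1) + ((C:ℝ)+(t:ℝ)))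
          = (K:ℝ)/4 + ((C:ℝ)+(t:ℝ))/(4*((C:ℝ)+1)) := by
        field_simp
      rw [e2]
      have hCt : (0:ℝ) ≤ (C:ℝ)+(t:ℝ) := by positivity
      have h14 : (1:ℝ) ≤ 4*((C:ℝ)+1) := by linarith
      have := div_le_self hCt h14
      linarith
    linarith
  obtain ⟨K, hK⟩ := exists_nat_gt (2*(2*((C:ℝ)+(t:ℝ)) + 2*(ρ.den:ℝ)*c + 2))
  have := main K
  linarith

/-- If `w` is an infinite binary uniformly recurrent word with uniform rational
letter frequencies, then some point `u` of the shift orbit closure of `w`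
(i.e. an infinite word all of whose prefixes are factors of `w`) is weakly
abelian periodic, with block frequencies equal to the frequencies of `w`. -/
theorem shift_orbit_closure_has_WAP_point (w : ℕ → Bool) (ρ : ℚ)
    (hur : UniformlyRecurrent w) (hfreq : UniformFrequency w (ρ : ℝ)) :
    ∃ u : ℕ → Bool, (∀ n : ℕ, ∃ i : ℕ, ∀ l : ℕ, l < n → u l = w (i + l)) ∧
      WAPwith u ρ := by
  have key : ∀ a t : ℕ, ∃ i m : ℕ, 0 < m ∧ (∀ l < t, w (i + l) = w (a + l)) ∧
      ((cntSeg w (i + t) m : ℚ) = ρ * m) := keyB w ρ hur hfreq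
  choose I M hM hpre hex using key
  let s : ℕ → ℕ × ℕ := fun j => Nat.rec ((0:ℕ), (0:ℕ))
    (fun _ p => (I p.1 p.2, p.2 + M p.1 p.2)) j
  let a : ℕ → ℕ := fun j => (s j).1
  let z : ℕ → ℕ := fun j => (s j).2
  have hzS : ∀ j, z (j+1) = z j + M (a j) (z j) := fun j => rfl
  have haS : ∀ j, a (j+1) = I (a j) (z j) := fun j => rfl
  have hzlt : ∀ j, z j < z (j+1) := by
    intro j
    rw [hzS j]
    exact Nat.lt_add_of_pos_right (hM (a j) (z j))
  have hzmono : StrictMono z := strictMono_nat_of_lt_succ hzlt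
  have hzge : ∀ j, j ≤ z j := fun j => hzmono.le_apply
  have hstep : ∀ j l, l < z j → w (a (j+1) + l) = w (a j + l) := by
    intro j l hl
    rw [haS j]
    exact hpre (a j) (z j) l hl
  have hagree : ∀ j j', j ≤ j' → ∀ l, l < z j → w (a j' + l) = w (a j + l) := by
    intro j j' hjj'
    induction j', hjj' using Nat.le_induction with
    | base => intro l _; rfl
    | succ j' hjj' ih =>
        intro l hl
        rw [hstep j' l (lt_of_lt_of_le hl (hzmono.monotone hjj'))]
        exact ih l hl
  let u : ℕ → Bool := fun l => w (a (l+1) + l)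
  have hu : ∀ j l, l < z j → u l = w (a j + l) := by
    intro j l hl
    rcases le_total j (l+1) with h | h
    · exact hagree j (l+1) h l hl
    · have hl' : l < z (l+1) := lt_of_lt_of_le (Nat.lt_succ_self l) (hzge (l+1))
      exact (hagree (l+1) j h l hl').symm
  refine ⟨u, ?_, ?_⟩
  · intro n
    exact ⟨a n, fun l hl => hu n l (lt_of_lt_of_le hl (hzge n))⟩
  · refine ⟨fun i => z (i+1), fun i i' h => hzmono (Nat.succ_lt_succ h), ?_⟩
    intro i
    have hL : z (i+2) = z (i+1) + M (a (i+1)) (z (i+1)) := hzS (i+1)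
    set L := M (a (i+1)) (z (i+1)) with hLdef
    have hones : ones u (z (i+2)) = ones u (z (i+1)) + cntSeg u (z (i+1)) L := by
      rw [ones_eq_cntSeg, ones_eq_cntSeg, hL]
      simpa using cntSeg_add u 0 (z (i+1)) L
    have hcnt : cntSeg u (z (i+1)) L = cntSeg w (a (i+2) + z (i+1)) L := by
      apply cntSeg_congr
      intro l hl
      have hlt2 : z (i+1) + l < z (i+2) := by omega
      have h2 := hu (i+2) (z (i+1) + l) hlt2
      rw [h2]
      exact congrArg w (Nat.add_assoc (a (i+2)) (z (i+1)) l).symm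
    have hexact : (cntSeg w (a (i+2) + z (i+1)) L : ℚ) = ρ * L := by
      have h3 := hex (a (i+1)) (z (i+1))
      rw [haS (i+1)]
      exact h3
    have hzq : ((z (i+2) : ℚ)) = (z (i+1) : ℚ) + (L : ℚ) := by exact_mod_cast hL
    rw [hones, hzq]
    push_cast
    rw [hcnt, hexact]
    ring
end
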